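/- arXiv:1509.00241 — 9 statements merged into one kernel-verified Lean document; each statement's English description precedes it below -/
import Mathlib

section
/- Let A be a nonzero n×n matrix over a field F such that A^r = A^{(r)} for all integers r with 2 ≤ r ≤ n+1. Then the minimal polynomial of A factors into distinct linear factors over F; in particular A is diagonalizable over F. -/
/-!
If `v = A eⱼ` is a column of `A`, the hypothesis says `A ^ r eⱼ` is the entrywise power `v ^ r`
for `1 ≤ r ≤ n + 1`, so `q(A) eⱼ` is `q` applied entrywise to `v` whenever `q(0) = 0` and
`deg q ≤ n + 1`. Taking `q = ∏ (X - ν)` over `ν ∈ {0} ∪ {entries of v}` (at most `n + 1` values)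
shows `q(A) eⱼ = 0`. Hence `A` is annihilated by `∏ (X - ν)` over `ν ∈ {0} ∪ {entries of A}`, a
split squarefree polynomial, and its eigenspaces span `Fⁿ`.
-/

open Polynomial Matrix

namespace Matrix

variable {ι R : Type*} [Fintype ι] [DecidableEq ι] [CommRing R]

theorem aeval_eq_map_eval_of_pow_eq_map_pow (A : Matrix ι ι R) {m : ℕ}
    (h : ∀ r : ℕ, 2 ≤ r → r ≤ m → A ^ r = A.map (· ^ r)) {q : R[X]}
    (hq₀ : q.coeff 0 = 0) (hqm : q.natDegree ≤ m) :
    aeval A q = A.map q.eval := by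
  have hterm : ∀ r ∈ Finset.range (m + 1), q.coeff r • A ^ r = q.coeff r • A.map (· ^ r) := by
    intro r hr
    rcases Nat.lt_or_ge r 2 with hr2 | hr2
    · interval_cases r
      · simp [hq₀]
      · simp
    · rw [h r hr2 (by simpa [Nat.lt_succ_iff] using hr)]
  ext i j
  rw [aeval_eq_sum_range' (Nat.lt_succ_of_le hqm), Finset.sum_congr rfl hterm, map_apply,
    eval_eq_sum_range' (Nat.lt_succ_of_le hqm)]
  simp [Matrix.sum_apply]

theorem aeval_prod_X_sub_C_entries_eq_zero_of_pow_eq_map_pow [Nontrivial R] [DecidableEq R]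
    (A : Matrix ι ι R) (h : ∀ r : ℕ, 2 ≤ r → r ≤ Fintype.card ι + 1 → A ^ r = A.map (· ^ r)) :
    aeval A (∏ ν ∈ insert 0 (Finset.univ.image fun ij : ι × ι ↦ A ij.1 ij.2), (X - C ν)) = 0 := by
  ext i j
  set t : Finset R := insert 0 (Finset.univ.image fun k ↦ A k j)
  have hdvd : ∏ ν ∈ t, (X - C ν) ∣
      ∏ ν ∈ insert 0 (Finset.univ.image fun ij : ι × ι ↦ A ij.1 ij.2), (X - C ν) := by
    refine Finset.prod_dvd_prod_of_subset _ _ _ (Finset.insert_subset_insert _ ?_)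
    intro ν hν
    obtain ⟨k, -, rfl⟩ := Finset.mem_image.1 hν
    exact Finset.mem_image_of_mem _ (Finset.mem_univ (k, j))
  obtain ⟨g, hg⟩ := hdvd
  have hcol : ∀ k, aeval A (∏ ν ∈ t, (X - C ν)) k j = 0 := by
    intro k
    rw [aeval_eq_map_eval_of_pow_eq_map_pow A h, map_apply, eval_prod]
    · exact Finset.prod_eq_zero
        (Finset.mem_insert_of_mem (Finset.mem_image_of_mem _ (Finset.mem_univ k))) (by simp)
    · rw [coeff_zero_eq_eval_zero, eval_prod]
      exact Finset.prod_eq_zero (Finset.mem_insert_self 0 _) (by simp)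
    · refine (natDegree_finsetProd_X_sub_C_eq_card t id).trans_le
        ((Finset.card_insert_le _ _).trans ?_)
      simpa using Finset.card_image_le (s := Finset.univ) (f := fun k ↦ A k j)
  rw [hg, mul_comm, aeval_mul, mul_apply]
  simp [hcol]

end Matrix

namespace Module.End

variable {K V : Type*} [Field K] [AddCommGroup V] [Module K V]

theorem ker_aeval_prod_X_sub_C (f : End K V) (s : Finset K) :
    LinearMap.ker (aeval f (∏ μ ∈ s, (X - C μ))) = ⨆ μ ∈ s, f.eigenspace μ := by
  classical
  induction s using Finset.induction_on with
  | empty => simp [one_eq_id]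
  | insert a s ha ih =>
    have hcop : IsCoprime (X - C a) (∏ μ ∈ s, (X - C μ)) :=
      IsCoprime.prod_right fun μ hμ ↦
        isCoprime_X_sub_C_of_isUnit_sub (sub_ne_zero.2 (ne_of_mem_of_not_mem hμ ha).symm).isUnit
    rw [Finset.prod_insert ha, ← sup_ker_aeval_eq_ker_aeval_mul_of_coprime f hcop, ih,
      Finset.iSup_insert, eigenspace_def]
    simp [Algebra.algebraMap_eq_smul_one]

theorem iSup_eigenspace_eq_top_of_aeval_prod_X_sub_C_eq_zero (f : End K V) {s : Finset K}
    (hs : aeval f (∏ μ ∈ s, (X - C μ)) = 0) : ⨆ μ, f.eigenspace μ = ⊤ := by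
  have hker := ker_aeval_prod_X_sub_C f s
  rw [hs, LinearMap.ker_zero] at hker
  rw [eq_top_iff, hker]
  exact iSup₂_le fun μ _ ↦ le_iSup _ μ

theorem exists_basis_apply_eq_smul_of_iSup_eigenspace_eq_top {ι : Type*}
    (b₀ : Module.Basis ι K V) (f : End K V) (hf : ⨆ μ, f.eigenspace μ = ⊤) :
    ∃ (b : Module.Basis ι K V) (d : ι → K), ∀ i, f (b i) = d i • b i := by
  classical
  have hint : DirectSum.IsInternal f.eigenspace :=
    DirectSum.isInternal_submodule_of_iSupIndep_of_iSup_eq_top f.eigenspaces_iSupIndep hf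
  let b' := hint.collectedBasis fun μ ↦ Module.Free.chooseBasis K (f.eigenspace μ)
  let e := b'.indexEquiv b₀
  refine ⟨b'.reindex e, fun i ↦ (e.symm i).1, fun i ↦ ?_⟩
  rw [Module.Basis.reindex_apply]
  exact mem_eigenspace_iff.1 (hint.collectedBasis_mem _ _)

end Module.End

theorem Matrix.exists_isUnit_det_eq_mul_diagonal_mul_inv {ι K : Type*} [Fintype ι]
    [DecidableEq ι] [Field K] (A : Matrix ι ι K)
    (hA : ⨆ μ, Module.End.eigenspace (toLin' A) μ = ⊤) :
    ∃ (P : Matrix ι ι K) (d : ι → K), IsUnit P.det ∧ A = P * diagonal d * P⁻¹ := by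
  obtain ⟨b, d, hb⟩ :=
    Module.End.exists_basis_apply_eq_smul_of_iSup_eigenspace_eq_top (Pi.basisFun K ι) _ hA
  let P := (Pi.basisFun K ι).toMatrix b
  have hP : IsUnit P.det :=
    letI := (Pi.basisFun K ι).invertibleToMatrix b
    isUnit_det_of_invertible P
  refine ⟨P, d, hP, ?_⟩
  have hAP : A * P = P * diagonal d := by
    ext i k
    calc (A * P) i k = (A *ᵥ b k) i := by
          simp [P, mul_apply, mulVec, dotProduct, Module.Basis.toMatrix_apply]
      _ = d k * b k i := by simpa using congrFun (hb k) i
      _ = (P * diagonal d) i k := by simp [P, Module.Basis.toMatrix_apply, mul_comm]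
  rw [← hAP, mul_nonsing_inv_cancel_right _ _ hP]

theorem stmt1_general {n : ℕ} {F : Type*} [Field F] (A : Matrix (Fin n) (Fin n) F)
    (h : ∀ r : ℕ, 2 ≤ r → r ≤ n + 1 → A ^ r = A.map (· ^ r)) :
    (minpoly F A).Splits ∧ Squarefree (minpoly F A) ∧
      ∃ (P : Matrix (Fin n) (Fin n) F) (d : Fin n → F),
        IsUnit P.det ∧ A = P * Matrix.diagonal d * P⁻¹ := by
  classical
  set s := insert 0 (Finset.univ.image fun ij : Fin n × Fin n ↦ A ij.1 ij.2)
  set p := ∏ ν ∈ s, (X - C ν)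
  have hp : aeval A p = 0 :=
    aeval_prod_X_sub_C_entries_eq_zero_of_pow_eq_map_pow A (by simpa using h)
  have hdvd : minpoly F A ∣ p := minpoly.dvd F A hp
  have hp_splits : p.Splits := Splits.prod fun ν _ ↦ Splits.X_sub_C ν
  have hp_sqfree : Squarefree p :=
    (separable_prod_X_sub_C_iff'.2 fun _ _ _ _ ↦ id).squarefree
  have hf : aeval (toLin' A) p = 0 := by
    rw [show aeval (toLin' A) p = toLinAlgEquiv' (aeval A p) from
      aeval_algHom_apply toLinAlgEquiv' A p, hp, map_zero]
  exact ⟨hp_splits.of_dvd (monic_prod_X_sub_C _ _).ne_zero hdvd, hp_sqfree.squarefree_of_dvd hdvd,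
    A.exists_isUnit_det_eq_mul_diagonal_mul_inv
      (Module.End.iSup_eigenspace_eq_top_of_aeval_prod_X_sub_C_eq_zero _ hf)⟩

theorem stmt1 {n : ℕ} {F : Type*} [Field F] (A : Matrix (Fin n) (Fin n) F)
    (hA : A ≠ 0)
    (h : ∀ r : ℕ, 2 ≤ r → r ≤ n + 1 → A ^ r = A.map (· ^ r)) :
    (minpoly F A).Splits ∧ Squarefree (minpoly F A) ∧
      ∃ (P : Matrix (Fin n) (Fin n) F) (d : Fin n → F),
        IsUnit P.det ∧ A = P * Matrix.diagonal d * P⁻¹ :=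
  stmt1_general A h
end

section
/- Let A be a nonzero n×n matrix over a field F such that A^r = A^{(r)} for all integers r with 2 ≤ r ≤ n+1. Then the set of nonzero eigenvalues of A equals the set of nonzero entries of A. -/
/-! The hypothesis says that `A` sends the entrywise `r`-th power of each of its columns `c`
to the entrywise `(r+1)`-th power, for `1 ≤ r ≤ n`. The entries of `c` together with `0` form
at most `n + 1` points, so by interpolation any `φ : F → F` with `φ 0 = 0` agrees on them with a
polynomial of degree `≤ n` without constant term. Hence `A (φ ∘ c) = (x ↦ x φ(x)) ∘ c`, and
`p(A) (φ ∘ c) = (x ↦ p(x) φ(x)) ∘ c` for every polynomial `p`. With `φ` the indicator of a nonzero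
entry `μ` this makes `μ` an eigenvalue; with `φ = id` it shows that `X ∏ (X - ν)`, over the
entries `ν` of `A`, annihilates `A`, so every nonzero eigenvalue is an entry. -/

open Polynomial Finset

theorem Polynomial.exists_natDegree_lt_eval_eq {F : Type*} [Field F] [DecidableEq F]
    {s : Finset F} (hs : s.Nonempty) (φ : F → F) :
    ∃ g : F[X], g.natDegree < #s ∧ ∀ x ∈ s, g.eval x = φ x := by
  refine ⟨Lagrange.interpolate s id φ, ?_, fun x hx =>
    Lagrange.eval_interpolate_at_node φ (Set.injOn_id _) hx⟩
  rcases eq_or_ne (Lagrange.interpolate s id φ) 0 with h0 | h0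
  · simpa [h0] using hs.card_pos
  · exact (natDegree_lt_iff_degree_lt h0).2 (Lagrange.degree_interpolate_lt φ (Set.injOn_id _))

namespace Matrix

variable {ι F : Type*} [Fintype ι] [Field F]

theorem mulVec_eval_comp_col {A : Matrix ι ι F} {N : ℕ} {j : ι}
    (h : ∀ r, 1 ≤ r → r ≤ N → A *ᵥ (A.col j) ^ r = (A.col j) ^ (r + 1))
    {g : F[X]} (hg0 : g.coeff 0 = 0) (hgN : g.natDegree < N + 1) :
    A *ᵥ (g.eval ∘ A.col j) = (fun x => x * g.eval x) ∘ A.col j := by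
  have hsum : g.eval ∘ A.col j = ∑ r ∈ range (N + 1), g.coeff r • (A.col j) ^ r := by
    funext k
    simp [eval_eq_sum_range' hgN]
  calc A *ᵥ (g.eval ∘ A.col j)
      = ∑ r ∈ range (N + 1), g.coeff r • (A.col j) ^ (r + 1) := by
        rw [hsum, mulVec_sum]
        refine sum_congr rfl fun r hr => ?_
        rcases Nat.eq_zero_or_pos r with rfl | hr0
        · simp [hg0]
        · rw [mulVec_smul, h r hr0 (by simpa [Nat.lt_succ_iff] using hr)]
    _ = (fun x => x * g.eval x) ∘ A.col j := by
        funext k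
        simp [eval_eq_sum_range' hgN, mul_sum, pow_succ, mul_comm, mul_assoc]

variable [DecidableEq ι]

theorem mulVec_col_pow_succ {A : Matrix ι ι F} {r : ℕ}
    (hr : A ^ r = A.map (· ^ r)) (hr' : A ^ (r + 1) = A.map (· ^ (r + 1))) (j : ι) :
    A *ᵥ (A.col j) ^ r = (A.col j) ^ (r + 1) := by
  funext i
  have := congrFun (congrFun hr' i) j
  rw [pow_succ', mul_apply, hr] at this
  simpa [mulVec, dotProduct] using this

theorem mulVec_comp_col_of_pow_eq_map {A : Matrix ι ι F}
    (h : ∀ r, 2 ≤ r → r ≤ Fintype.card ι + 1 → A ^ r = A.map (· ^ r))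
    (j : ι) {φ : F → F} (hφ : φ 0 = 0) :
    A *ᵥ (φ ∘ A.col j) = (fun x => x * φ x) ∘ A.col j := by
  classical
  have hpow : ∀ r, 1 ≤ r → r ≤ Fintype.card ι + 1 → A ^ r = A.map (· ^ r) := by
    intro r hr1 hr
    rcases hr1.eq_or_lt with rfl | hr2
    · simp
    · exact h r hr2 hr
  set s := insert 0 (univ.image (A.col j))
  have hs : #s ≤ Fintype.card ι + 1 :=
    (card_insert_le _ _).trans (Nat.add_le_add_right (card_image_le.trans_eq card_univ) 1)
  obtain ⟨g, hgdeg, hg⟩ := exists_natDegree_lt_eval_eq (insert_nonempty 0 _) φ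
  have hgcol : ∀ k, g.eval (A k j) = φ (A k j) :=
    fun k => hg _ (mem_insert_of_mem (mem_image_of_mem _ (mem_univ k)))
  have hg0 : g.coeff 0 = 0 := by
    rw [coeff_zero_eq_eval_zero, hg 0 (mem_insert_self _ _), hφ]
  calc A *ᵥ (φ ∘ A.col j) = A *ᵥ (g.eval ∘ A.col j) := by
        congr 1; funext k; exact (hgcol k).symm
    _ = (fun x => x * g.eval x) ∘ A.col j :=
        mulVec_eval_comp_col (fun r hr1 hr => mulVec_col_pow_succ (hpow r hr1 (by omega))
          (hpow (r + 1) (by omega) (by omega)) j) hg0 (hgdeg.trans_le hs)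
    _ = (fun x => x * φ x) ∘ A.col j := by
        funext k; simp [hgcol]

theorem pow_mulVec_comp_col_of_pow_eq_map {A : Matrix ι ι F}
    (h : ∀ r, 2 ≤ r → r ≤ Fintype.card ι + 1 → A ^ r = A.map (· ^ r))
    (j : ι) (m : ℕ) {φ : F → F} (hφ : φ 0 = 0) :
    A ^ m *ᵥ (φ ∘ A.col j) = (fun x => x ^ m * φ x) ∘ A.col j := by
  induction m generalizing φ with
  | zero => simp
  | succ m ih =>
    rw [pow_succ, ← mulVec_mulVec, mulVec_comp_col_of_pow_eq_map h j hφ, ih (by simp)]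
    simp only [pow_succ, mul_assoc]

theorem aeval_mulVec_comp_col_of_pow_eq_map {A : Matrix ι ι F}
    (h : ∀ r, 2 ≤ r → r ≤ Fintype.card ι + 1 → A ^ r = A.map (· ^ r))
    (j : ι) (p : F[X]) {φ : F → F} (hφ : φ 0 = 0) :
    aeval A p *ᵥ (φ ∘ A.col j) = (fun x => p.eval x * φ x) ∘ A.col j := by
  induction p using Polynomial.induction_on' with
  | add p q hp hq =>
    rw [map_add, add_mulVec, hp, hq]
    ext k
    simp [add_mul]
  | monomial m a =>
    rw [aeval_monomial, ← Algebra.smul_def, smul_mulVec,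
      pow_mulVec_comp_col_of_pow_eq_map h j m hφ]
    ext k
    simp [mul_assoc]

theorem isRoot_minpoly_of_entry_eq {A : Matrix ι ι F}
    (h : ∀ r, 2 ≤ r → r ≤ Fintype.card ι + 1 → A ^ r = A.map (· ^ r))
    {μ : F} (hμ : μ ≠ 0) {i j : ι} (hij : A i j = μ) :
    (minpoly F A).IsRoot μ := by
  classical
  have := congrFun (aeval_mulVec_comp_col_of_pow_eq_map h j (minpoly F A)
    (φ := fun x => if x = μ then 1 else 0) (by simp [hμ.symm])) i
  simpa [hij] using this.symm

theorem exists_entry_eq_of_isRoot_minpoly {A : Matrix ι ι F}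
    (h : ∀ r, 2 ≤ r → r ≤ Fintype.card ι + 1 → A ^ r = A.map (· ^ r))
    {μ : F} (hμ : μ ≠ 0) (hroot : (minpoly F A).IsRoot μ) :
    ∃ i j, A i j = μ := by
  classical
  set P : F[X] := ∏ ν ∈ univ.image (fun p : ι × ι => A p.1 p.2), (X - C ν)
  have hP : ∀ i j, P.eval (A i j) = 0 := fun i j => by
    rw [eval_prod]
    exact prod_eq_zero (mem_image_of_mem _ (mem_univ (i, j))) (by simp)
  have hPX : aeval A (P * X) = 0 := by
    ext i j
    have hcol := aeval_mulVec_comp_col_of_pow_eq_map h j P (φ := id) rfl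
    rw [Function.id_comp, ← mulVec_single_one, mulVec_mulVec, mulVec_single_one] at hcol
    simpa [hP] using congrFun hcol i
  have hPμ : P.eval μ = 0 := by
    simpa [hμ] using hroot.dvd (minpoly.dvd F A hPX)
  obtain ⟨ν, hν, hμν⟩ := prod_eq_zero_iff.mp (eval_prod _ _ μ ▸ hPμ)
  obtain ⟨⟨i, j⟩, -, rfl⟩ := mem_image.mp hν
  exact ⟨i, j, (sub_eq_zero.mp (by simpa using hμν)).symm⟩

end Matrix

theorem stmt2_general {n : ℕ} {F : Type*} [Field F] (A : Matrix (Fin n) (Fin n) F)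
    (h : ∀ r : ℕ, 2 ≤ r → r ≤ n + 1 → A ^ r = A.map (· ^ r)) :
    {μ : F | μ ≠ 0 ∧ (minpoly F A).IsRoot μ} =
      {μ : F | μ ≠ 0 ∧ ∃ i j, A i j = μ} := by
  have hA : ∀ r, 2 ≤ r → r ≤ Fintype.card (Fin n) + 1 → A ^ r = A.map (· ^ r) := by
    rwa [Fintype.card_fin]
  ext μ
  exact and_congr_right fun hμ => ⟨Matrix.exists_entry_eq_of_isRoot_minpoly hA hμ,
    fun ⟨_, _, hij⟩ => Matrix.isRoot_minpoly_of_entry_eq hA hμ hij⟩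

theorem stmt2 {n : ℕ} {F : Type*} [Field F] (A : Matrix (Fin n) (Fin n) F)
    (hA : A ≠ 0)
    (h : ∀ r : ℕ, 2 ≤ r → r ≤ n + 1 → A ^ r = A.map (· ^ r)) :
    {μ : F | μ ≠ 0 ∧ (minpoly F A).IsRoot μ} =
      {μ : F | μ ≠ 0 ∧ ∃ i j, A i j = μ} :=
  stmt2_general A h
end

section
/- Suppose A = Σ_{i=1}^k λ_i E_i where λ_1,…,λ_k are distinct nonzero elements of a field F, each E_i is an idempotent matrix all of whose entries lie in {0,1}, E_i E_j = 0 for i ≠ j, and the Hadamard product E_i ∘ E_j = 0 for i ≠ j. Then A^r = A^{(r)} for every positive integer r. -/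
/-!
The orthogonality relations make `∑ cᵢ • eᵢ ↦ (cᵢ)ᵢ` multiplicative on the span of a family of
orthogonal idempotents `eᵢ`, so `(∑ cᵢ • eᵢ) ^ r = ∑ cᵢ ^ r • eᵢ` for `r ≥ 1`. This applies to the
matrices `Eᵢ` in `M_n(F)`, and also, entry by entry, to the scalars `Eᵢ a b` in `F`: these are
`0` or `1`, hence idempotent, and the Hadamard condition says that `Eᵢ a b * Eⱼ a b = 0` for
`i ≠ j`. Both sides of `A ^ r = A^{(r)}` are therefore `∑ λᵢ ^ r • Eᵢ`.
-/

namespace OrthogonalIdempotents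

variable {R A ι : Type*} [CommSemiring R] [Semiring A] [Algebra R A] [Fintype ι] {e : ι → A}

theorem sum_smul_mul_sum_smul (he : OrthogonalIdempotents e) (a b : ι → R) :
    (∑ i, a i • e i) * (∑ i, b i • e i) = ∑ i, (a i * b i) • e i := by
  classical
  simp only [Finset.sum_mul_sum, smul_mul_smul_comm, he.mul_eq, smul_ite, smul_zero,
    Finset.sum_ite_eq, Finset.mem_univ, if_true]

theorem sum_smul_pow (he : OrthogonalIdempotents e) (c : ι → R) {r : ℕ} (hr : r ≠ 0) :
    (∑ i, c i • e i) ^ r = ∑ i, c i ^ r • e i := by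
  obtain ⟨m, rfl⟩ := Nat.exists_eq_succ_of_ne_zero hr
  induction m with
  | zero => simp only [pow_one]
  | succ m ih => rw [pow_succ, ih m.succ_ne_zero, he.sum_smul_mul_sum_smul]; simp only [pow_succ]

end OrthogonalIdempotents

theorem Matrix.orthogonalIdempotents_apply_of_hadamard_eq_zero {R m ι : Type*} [Semiring R]
    {M : ι → Matrix m m R} (h01 : ∀ i a b, M i a b = 0 ∨ M i a b = 1)
    (hhad : Pairwise fun i j ↦ Matrix.hadamard (M i) (M j) = 0) (a b : m) :
    OrthogonalIdempotents fun i ↦ M i a b where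
  idem i := (h01 i a b).elim (fun h ↦ h ▸ .zero) (fun h ↦ h ▸ .one)
  ortho _ _ hij := congrFun (congrFun (hhad hij) a) b

theorem stmt3_general {n k : ℕ} {F : Type*} [Field F]
    (lam : Fin k → F) (E : Fin k → Matrix (Fin n) (Fin n) F)
    (hidem : ∀ i, E i * E i = E i)
    (h01 : ∀ i a b, E i a b = 0 ∨ E i a b = 1)
    (hmul : ∀ i j, i ≠ j → E i * E j = 0)
    (hhad : ∀ i j, i ≠ j → Matrix.hadamard (E i) (E j) = 0)
    (A : Matrix (Fin n) (Fin n) F) (hA : A = ∑ i, lam i • E i) :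
    ∀ r : ℕ, 1 ≤ r → A ^ r = A.map (· ^ r) := by
  intro r hr
  have hr0 : r ≠ 0 := Nat.one_le_iff_ne_zero.mp hr
  have hE : OrthogonalIdempotents E := ⟨hidem, fun i j hij ↦ hmul i j hij⟩
  have hentry := Matrix.orthogonalIdempotents_apply_of_hadamard_eq_zero h01
    fun i j hij ↦ hhad i j hij
  ext a b
  simpa only [hA, hE.sum_smul_pow lam hr0, Matrix.map_apply, Matrix.sum_apply,
    Matrix.smul_apply] using ((hentry a b).sum_smul_pow lam hr0).symm

theorem stmt3 {n k : ℕ} {F : Type*} [Field F]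
    (lam : Fin k → F) (E : Fin k → Matrix (Fin n) (Fin n) F)
    (hne : ∀ i, lam i ≠ 0) (hinj : Function.Injective lam)
    (hidem : ∀ i, E i * E i = E i)
    (h01 : ∀ i a b, E i a b = 0 ∨ E i a b = 1)
    (hmul : ∀ i j, i ≠ j → E i * E j = 0)
    (hhad : ∀ i j, i ≠ j → Matrix.hadamard (E i) (E j) = 0)
    (A : Matrix (Fin n) (Fin n) F) (hA : A = ∑ i, lam i • E i) :
    ∀ r : ℕ, 1 ≤ r → A ^ r = A.map (· ^ r) :=
  stmt3_general lam E hidem h01 hmul hhad A hA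
end

section
/- Let A be a nonzero n×n matrix over a field F. Then A^r = A^{(r)} for every positive integer r if and only if A^r = A^{(r)} for every integer r ∈ {2, 3, …, n+1}. -/
/-!
Let `a = A i j` and `q = χ_A · (X - a)`, a monic polynomial of degree `n + 1` killing both `A`
(Cayley–Hamilton) and `a`. Reducing `X ^ m` modulo `q` writes `A ^ (m + 1)` and `a ^ (m + 1)` as
the same combination of the powers with exponents `1, …, n + 1`, on which the `(i, j)` entry of
`A ^ k` is `a ^ k` by hypothesis.
-/

open Polynomial Finset

section

variable {R S T : Type*} [CommRing R] [Ring S] [Ring T] [Algebra R S] [Algebra R T]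

theorem LinearMap.map_mul_aeval_eq_of_map_pow_eq {φ : S →ₗ[R] T} {x : S} {y : T} {d : ℕ}
    (h : ∀ k, 1 ≤ k → k ≤ d → φ (x ^ k) = y ^ k) {p : R[X]} (hp : p.natDegree < d) :
    φ (x * aeval x p) = y * aeval y p := by
  simp only [aeval_eq_sum_range' hp, Finset.mul_sum, mul_smul_comm, ← pow_succ', map_sum,
    map_smul]
  refine Finset.sum_congr rfl fun k hk => ?_
  rw [h (k + 1) k.succ_pos (Finset.mem_range.mp hk)]

theorem LinearMap.map_pow_eq_of_aeval_eq_zero {φ : S →ₗ[R] T} {x : S} {y : T} {q : R[X]}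
    (hq : q.Monic) (hx : aeval x q = 0) (hy : aeval y q = 0)
    (h : ∀ k, 1 ≤ k → k ≤ q.natDegree → φ (x ^ k) = y ^ k) {m : ℕ} (hm : 1 ≤ m) :
    φ (x ^ m) = y ^ m := by
  by_cases hq1 : q = 1
  · subst hq1
    have : Subsingleton T := subsingleton_of_zero_eq_one (by simpa using hy.symm)
    exact Subsingleton.elim _ _
  obtain ⟨m, rfl⟩ := Nat.exists_eq_add_of_le' hm
  have hdeg := natDegree_modByMonic_lt (X ^ m) hq hq1
  rw [pow_succ', pow_succ', ← aeval_X_pow (R := R) (x := x), ← aeval_X_pow (R := R) (x := y),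
    ← aeval_modByMonic_eq_self_of_root hx, ← aeval_modByMonic_eq_self_of_root hy]
  exact φ.map_mul_aeval_eq_of_map_pow_eq h hdeg

end

theorem Matrix.natDegree_charpoly_mul_X_sub_C {n : Type*} [DecidableEq n] [Fintype n]
    {R : Type*} [CommRing R] [Nontrivial R] (A : Matrix n n R) (a : R) :
    (A.charpoly * (X - C a)).natDegree = Fintype.card n + 1 := by
  rw [A.charpoly_monic.natDegree_mul (monic_X_sub_C a), A.charpoly_natDegree_eq_dim,
    natDegree_X_sub_C]

theorem stmt4_general {n : ℕ} {F : Type*} [Field F] (A : Matrix (Fin n) (Fin n) F) :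
    (∀ r : ℕ, 1 ≤ r → A ^ r = A.map (· ^ r)) ↔
      (∀ r : ℕ, 2 ≤ r → r ≤ n + 1 → A ^ r = A.map (· ^ r)) := by
  refine ⟨fun h r hr _ => h r (one_le_two.trans hr), fun h r hr => ?_⟩
  ext i j
  set q := A.charpoly * (X - C (A i j))
  have hdeg : q.natDegree = n + 1 := by
    rw [A.natDegree_charpoly_mul_X_sub_C, Fintype.card_fin]
  have hA : aeval A q = 0 := by rw [map_mul, A.aeval_self_charpoly, zero_mul]
  have ha : aeval (A i j) q = 0 := by simp [q]
  refine (Matrix.entryLinearMap F F i j).map_pow_eq_of_aeval_eq_zero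
    (A.charpoly_monic.mul (monic_X_sub_C _)) hA ha (fun k hk1 hkd => ?_) hr
  rcases hk1.eq_or_lt with rfl | hk2
  · simp
  · simpa using congrFun₂ (h k hk2 (hdeg ▸ hkd)) i j

theorem stmt4 {n : ℕ} {F : Type*} [Field F] (A : Matrix (Fin n) (Fin n) F)
    (hA : A ≠ 0) :
    (∀ r : ℕ, 1 ≤ r → A ^ r = A.map (· ^ r)) ↔
      (∀ r : ℕ, 2 ≤ r → r ≤ n + 1 → A ^ r = A.map (· ^ r)) :=
  stmt4_general A
end

section
/- Let A be a nonzero n×n matrix over a field F satisfying A^r = A^{(r)} for all integers 2 ≤ r ≤ n+1. Then there exist k ≥ 1, distinct nonzero elements λ_1,…,λ_k of F, and idempotent matrices E_1,…,E_k with entries in {0,1}, such that A = Σ λ_i E_i while E_i E_j = 0 and E_i ∘ E_j = 0 for all i ≠ j. -/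
/-!
Let `S` be the set of nonzero entries of `A` and `E x` the `0/1` matrix marking the entries equal
to `x`, so that `A = ∑ x ∈ S, x • E x`. The hypothesis says that `p(A)` is computed entrywise for
every polynomial `p` with `p(0) = 0` and degree at most `n + 1`. Applied to `X * charpoly A`, which
annihilates `A` by Cayley–Hamilton, this makes every entry a root, so `|S ∪ {0}| ≤ n + 1`. Hence for
`y ∈ S` the Lagrange basis polynomial `ℓ_y` of the nodes `S ∪ {0}` has degree at most `n`, and
entrywise evaluation gives `ℓ_y(A) = E y` and `A ℓ_y(A) = y • E y`. So each `E y` is an eigenvector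
of left multiplication by `A`, whence `E x * E y = ℓ_x(A) E y = ℓ_x(y) • E y = δ_{xy} • E y`.
-/

open Polynomial Finset

theorem Polynomial.aeval_mul_of_mul_eq_smul {R M : Type*} [CommRing R] [Ring M] [Algebra R M]
    {a e : M} {y : R} (h : a * e = y • e) (p : R[X]) : aeval a p * e = p.eval y • e := by
  have := Module.End.aeval_apply_of_mem_apply_eq_smul (f := Algebra.lmul R M a) (p := p) h
  rwa [aeval_algHom_apply] at this

namespace Matrix

variable {m n R : Type*}

section Entries

variable [DecidableEq R] [Semiring R]

def entryIndicator (A : Matrix m n R) (x : R) : Matrix m n R :=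
  A.map fun a => if a = x then 1 else 0

@[simp]
theorem entryIndicator_apply (A : Matrix m n R) (x : R) (i : m) (j : n) :
    A.entryIndicator x i j = if A i j = x then 1 else 0 :=
  rfl

theorem entryIndicator_apply_eq_zero_or_eq_one (A : Matrix m n R) (x : R) (i : m) (j : n) :
    A.entryIndicator x i j = 0 ∨ A.entryIndicator x i j = 1 := by
  by_cases h : A i j = x <;> simp [h]

theorem hadamard_entryIndicator_of_ne (A : Matrix m n R) {x y : R} (hxy : x ≠ y) :
    A.entryIndicator x ⊙ A.entryIndicator y = 0 := by
  ext i j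
  by_cases h : A i j = x
  · simp [h, hxy]
  · simp [h]

variable [Fintype m] [Fintype n]

def nonzeroEntries (A : Matrix m n R) : Finset R :=
  (univ.image fun p : m × n => A p.1 p.2).erase 0

variable {A : Matrix m n R}

theorem mem_nonzeroEntries {x : R} : x ∈ A.nonzeroEntries ↔ x ≠ 0 ∧ ∃ i j, A i j = x := by
  simp [nonzeroEntries]

theorem entry_mem_insert_zero_nonzeroEntries (i : m) (j : n) :
    A i j ∈ insert 0 A.nonzeroEntries := by
  by_cases h : A i j = 0
  · simp [h]
  · exact mem_insert_of_mem (mem_nonzeroEntries.2 ⟨h, i, j, rfl⟩)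

theorem nonzeroEntries_nonempty (hA : A ≠ 0) : A.nonzeroEntries.Nonempty := by
  obtain ⟨i, j, hij⟩ : ∃ i j, A i j ≠ 0 := by
    by_contra! h
    exact hA (ext h)
  exact ⟨A i j, mem_nonzeroEntries.2 ⟨hij, i, j, rfl⟩⟩

theorem sum_smul_entryIndicator : ∑ x ∈ A.nonzeroEntries, x • A.entryIndicator x = A := by
  ext i j
  simp only [sum_apply, smul_apply, entryIndicator_apply, smul_eq_mul, mul_ite, mul_one, mul_zero]
  rw [sum_ite_eq]
  split_ifs with h
  · rfl
  · by_contra hne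
    exact h (mem_nonzeroEntries.2 ⟨Ne.symm hne, i, j, rfl⟩)

end Entries

section EntrywisePowers

variable {ι : Type*} [Fintype ι] [DecidableEq ι]

theorem aeval_eq_map_eval_of_pow_eq_map_pow_s5 [CommSemiring R] {A : Matrix ι ι R} {N : ℕ}
    (hA : ∀ r, 2 ≤ r → r ≤ N → A ^ r = A.map (· ^ r)) {p : R[X]} (hp₀ : p.coeff 0 = 0)
    (hpN : p.natDegree ≤ N) :
    aeval A p = A.map (eval · p) := by
  have hlt : p.natDegree < N + 1 := Nat.lt_succ_of_le hpN
  ext i j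
  rw [aeval_eq_sum_range' hlt, map_apply, eval_eq_sum_range' hlt, sum_apply]
  refine sum_congr rfl fun r hr => ?_
  rw [smul_apply, smul_eq_mul]
  rcases r with _ | _ | r
  · simp [hp₀]
  · simp
  · rw [hA (r + 2) (by omega) (by simp at hr; omega), map_apply]

variable {F : Type*} [Field F] [DecidableEq F]

omit [DecidableEq ι] in
noncomputable def entryBasis (A : Matrix ι ι F) (y : F) : F[X] :=
  Lagrange.basis (insert 0 A.nonzeroEntries) id y

variable {A : Matrix ι ι F} (hA : ∀ r, 2 ≤ r → r ≤ Fintype.card ι + 1 → A ^ r = A.map (· ^ r))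
include hA

theorem card_insert_zero_nonzeroEntries_le :
    #(insert 0 A.nonzeroEntries) ≤ Fintype.card ι + 1 := by
  set q : F[X] := X * A.charpoly
  have hq_ne : q ≠ 0 := mul_ne_zero X_ne_zero A.charpoly_monic.ne_zero
  have hq₀ : q.coeff 0 = 0 := by simp [q]
  have hq_deg : q.natDegree = Fintype.card ι + 1 := by
    rw [natDegree_mul X_ne_zero A.charpoly_monic.ne_zero, natDegree_X,
      charpoly_natDegree_eq_dim, add_comm]
  have hq_entries : A.map (eval · q) = 0 := by
    rw [← aeval_eq_map_eval_of_pow_eq_map_pow_s5 hA hq₀ hq_deg.le, map_mul,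
      aeval_self_charpoly, mul_zero]
  have hsub : insert 0 A.nonzeroEntries ⊆ q.roots.toFinset := by
    intro x hx
    rw [Multiset.mem_toFinset, mem_roots hq_ne, IsRoot.def]
    rcases mem_insert.1 hx with rfl | hx
    · rwa [← coeff_zero_eq_eval_zero]
    · obtain ⟨-, i, j, rfl⟩ := mem_nonzeroEntries.1 hx
      exact congr_fun₂ hq_entries i j
  calc #(insert 0 A.nonzeroEntries) ≤ #q.roots.toFinset := card_le_card hsub
    _ ≤ Multiset.card q.roots := Multiset.toFinset_card_le _
    _ ≤ q.natDegree := card_roots' q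
    _ = Fintype.card ι + 1 := hq_deg

theorem natDegree_entryBasis_le {y : F} (hy : y ∈ A.nonzeroEntries) :
    (A.entryBasis y).natDegree ≤ Fintype.card ι := by
  have := card_insert_zero_nonzeroEntries_le hA
  rw [entryBasis, Lagrange.natDegree_basis (Set.injOn_id _) (mem_insert_of_mem hy)]
  omega

omit [DecidableEq ι] hA in
theorem coeff_zero_entryBasis {y : F} (hy : y ≠ 0) : (A.entryBasis y).coeff 0 = 0 := by
  rw [coeff_zero_eq_eval_zero]
  exact Lagrange.eval_basis_of_ne (v := id) hy (mem_insert_self 0 _)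

omit [DecidableEq ι] hA in
theorem eval_entryBasis_apply {y : F} (hy : y ∈ A.nonzeroEntries) (i j : ι) :
    (A.entryBasis y).eval (A i j) = if A i j = y then 1 else 0 := by
  split_ifs with hij
  · rw [hij]
    exact Lagrange.eval_basis_self (Set.injOn_id _) (mem_insert_of_mem hy)
  · exact Lagrange.eval_basis_of_ne (v := id) (Ne.symm hij) (entry_mem_insert_zero_nonzeroEntries i j)

theorem entryIndicator_eq_aeval_entryBasis {y : F} (hy : y ∈ A.nonzeroEntries) :
    A.entryIndicator y = aeval A (A.entryBasis y) := by
  rw [aeval_eq_map_eval_of_pow_eq_map_pow_s5 hA (coeff_zero_entryBasis (mem_nonzeroEntries.1 hy).1)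
    ((natDegree_entryBasis_le hA hy).trans (Nat.le_succ _))]
  ext i j
  simp [eval_entryBasis_apply hy]

theorem mul_entryIndicator {y : F} (hy : y ∈ A.nonzeroEntries) :
    A * A.entryIndicator y = y • A.entryIndicator y := by
  have hdeg : (X * A.entryBasis y).natDegree ≤ Fintype.card ι + 1 := by
    have := natDegree_entryBasis_le hA hy
    exact natDegree_mul_le.trans (by rw [natDegree_X]; omega)
  calc A * A.entryIndicator y = aeval A (X * A.entryBasis y) := by
        rw [map_mul, aeval_X, ← entryIndicator_eq_aeval_entryBasis hA hy]
    _ = A.map (eval · (X * A.entryBasis y)) :=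
        aeval_eq_map_eval_of_pow_eq_map_pow_s5 hA (by simp) hdeg
    _ = y • A.entryIndicator y := by
        ext i j
        rw [map_apply, eval_mul, eval_X, eval_entryBasis_apply hy]
        by_cases hij : A i j = y <;> simp [hij]

theorem entryIndicator_mul_entryIndicator {x y : F} (hx : x ∈ A.nonzeroEntries)
    (hy : y ∈ A.nonzeroEntries) :
    A.entryIndicator x * A.entryIndicator y = if x = y then A.entryIndicator y else 0 := by
  obtain ⟨-, i, j, rfl⟩ := mem_nonzeroEntries.1 hy
  rw [entryIndicator_eq_aeval_entryBasis hA hx,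
    aeval_mul_of_mul_eq_smul (mul_entryIndicator hA hy), eval_entryBasis_apply hx]
  by_cases hxy : A i j = x
  · simp [hxy]
  · simp [hxy, Ne.symm hxy]

end EntrywisePowers

end Matrix

theorem stmt5 {n : ℕ} {F : Type*} [Field F] (A : Matrix (Fin n) (Fin n) F)
    (hA : A ≠ 0)
    (h : ∀ r : ℕ, 2 ≤ r → r ≤ n + 1 → A ^ r = A.map (· ^ r)) :
    ∃ (k : ℕ) (_ : 1 ≤ k) (lam : Fin k → F) (E : Fin k → Matrix (Fin n) (Fin n) F),
      (∀ i, lam i ≠ 0) ∧ Function.Injective lam ∧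
      (∀ i, E i * E i = E i) ∧
      (∀ i a b, E i a b = 0 ∨ E i a b = 1) ∧
      (∀ i j, i ≠ j → E i * E j = 0) ∧
      (∀ i j, i ≠ j → Matrix.hadamard (E i) (E j) = 0) ∧
      A = ∑ i, lam i • E i := by
  classical
  replace h : ∀ r, 2 ≤ r → r ≤ Fintype.card (Fin n) + 1 → A ^ r = A.map (· ^ r) := by
    rwa [Fintype.card_fin]
  set S := A.nonzeroEntries
  let lam : Fin #S → F := fun i => S.equivFin.symm i
  have hlam : ∀ i, lam i ∈ S := fun i => (S.equivFin.symm i).2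
  have hlam_inj : Function.Injective lam := Subtype.val_injective.comp S.equivFin.symm.injective
  refine ⟨#S, (Matrix.nonzeroEntries_nonempty hA).card_pos, lam, fun i => A.entryIndicator (lam i),
    fun i => (Matrix.mem_nonzeroEntries.1 (hlam i)).1, hlam_inj, fun i => ?_,
    fun i => A.entryIndicator_apply_eq_zero_or_eq_one (lam i), fun i j hij => ?_,
    fun i j hij => A.hadamard_entryIndicator_of_ne (hlam_inj.ne hij), ?_⟩
  · simpa using Matrix.entryIndicator_mul_entryIndicator h (hlam i) (hlam i)
  · simpa [hlam_inj.ne hij] using Matrix.entryIndicator_mul_entryIndicator h (hlam i) (hlam j)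
  · conv_lhs => rw [← Matrix.sum_smul_entryIndicator (A := A), ← sum_coe_sort S]
    exact (S.equivFin.symm.sum_comp fun x : S => (x : F) • A.entryIndicator x).symm
end

section
/- Let E be an idempotent n×n matrix over a field F whose characteristic is zero or greater than n, with all entries in {0,1}. If E has no zero row and no zero column, then E is the identity matrix. -/
/-!
Read `E i j = 1` as an edge `i → j`. Since `E` has `0/1` entries, `(E * E) i j` counts the
midpoints `k` of paths `i → k → j`; this count is at most `n`, so idempotency pins it to
exactly `E i j ∈ {0, 1}`. Hence the edge relation is transitive and every edge has a unique
midpoint. With no zero rows or columns, finiteness and transitivity give loops `t → t` and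
`u → u` with `u → i → t`, and then `i` and `t` are both midpoints of the edge `u → t`, so
`i = t` is a loop. Finally an edge `i → j` has midpoints `i` and `j`, so `i = j`.
-/

open Finset

theorem natCast_inj_of_le_of_ringChar {R : Type*} [Ring R] {n a b : ℕ}
    (hR : ringChar R = 0 ∨ n < ringChar R) (ha : a ≤ n) (hb : b ≤ n) (h : (a : R) = b) :
    a = b := by
  have hmod := (CharP.natCast_eq_natCast R (ringChar R)).1 h
  rcases hR with h0 | hn
  · simpa [h0, Nat.ModEq] using hmod
  · exact hmod.eq_of_lt_of_lt (ha.trans_lt hn) (hb.trans_lt hn)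

theorem Finite.exists_rel_self_of_forall_exists_rel {α : Type*} [Finite α]
    {r : α → α → Prop} [IsTrans α r] (h : ∀ a, ∃ b, r a b) (a : α) : ∃ b, r a b ∧ r b b := by
  by_contra! hirr
  let s : α → α → Prop := fun c b => r a b ∧ r b c
  have : IsTrans α s := ⟨fun _ _ _ hcb hdc => ⟨hdc.1, _root_.trans hdc.2 hcb.2⟩⟩
  have : Std.Irrefl s := ⟨fun b hb => hirr b hb.1 hb.2⟩
  obtain ⟨m, ham, hmax⟩ :=
    (Finite.wellFounded_of_trans_of_irrefl s).has_min {b | r a b} (h a)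
  obtain ⟨c, hmc⟩ := h m
  exact hmax c (_root_.trans ham hmc) ⟨ham, hmc⟩

namespace Matrix

variable {ι R : Type*} [Fintype ι] [DecidableEq R]

def midpoints [Zero R] [One R] (E : Matrix ι ι R) (i j : ι) : Finset ι :=
  {k | E i k = 1 ∧ E k j = 1}

theorem mul_self_apply_eq_card_midpoints [NonAssocSemiring R] {E : Matrix ι ι R}
    (h01 : ∀ i j, E i j = 0 ∨ E i j = 1) (i j : ι) :
    (E * E) i j = #(E.midpoints i j) := by
  rw [mul_apply, midpoints, natCast_card_filter]
  refine sum_congr rfl fun k _ => ?_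
  rcases h01 i k with h1 | h1 <;> rcases h01 k j with h2 | h2 <;> simp [h1, h2]

variable [Ring R] {E : Matrix ι ι R}

section IdempotentZeroOne

variable (h01 : ∀ i j, E i j = 0 ∨ E i j = 1) (hE : IsIdempotentElem E)
  (hchar : ringChar R = 0 ∨ Fintype.card ι < ringChar R)
include h01 hE hchar

theorem card_midpoints_eq_zero {i j : ι} (hij : E i j = 0) : #(E.midpoints i j) = 0 :=
  natCast_inj_of_le_of_ringChar hchar (card_le_univ _) (Nat.zero_le _) <| by
    rw [← mul_self_apply_eq_card_midpoints h01, hE.eq, hij, Nat.cast_zero]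

theorem card_midpoints_eq_one {i j : ι} (hij : E i j = 1) : #(E.midpoints i j) = 1 :=
  natCast_inj_of_le_of_ringChar hchar (card_le_univ _)
    (Fintype.card_pos_iff.2 ⟨i⟩) <| by
    rw [← mul_self_apply_eq_card_midpoints h01, hE.eq, hij, Nat.cast_one]

theorem apply_eq_one_trans {i j k : ι} (hik : E i k = 1) (hkj : E k j = 1) : E i j = 1 := by
  refine (h01 i j).resolve_left fun hij => ?_
  have hk : k ∈ E.midpoints i j := by simp [midpoints, hik, hkj]
  simp [card_eq_zero.1 (card_midpoints_eq_zero h01 hE hchar hij)] at hk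

theorem eq_of_mem_midpoints {i j k l : ι} (hij : E i j = 1) (hk : k ∈ E.midpoints i j)
    (hl : l ∈ E.midpoints i j) : k = l :=
  card_le_one.1 (card_midpoints_eq_one h01 hE hchar hij).le k hk l hl

variable (hrow : ∀ i, ∃ j, E i j = 1) (hcol : ∀ j, ∃ i, E i j = 1)
include hrow hcol

theorem apply_self_eq_one (i : ι) : E i i = 1 := by
  have : IsTrans ι (fun i j => E i j = 1) := ⟨fun _ _ _ => apply_eq_one_trans h01 hE hchar⟩
  obtain ⟨t, hit, htt⟩ := Finite.exists_rel_self_of_forall_exists_rel hrow i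
  obtain ⟨u, hui, huu⟩ :=
    Finite.exists_rel_self_of_forall_exists_rel (r := fun j i => E i j = 1) hcol i
  have hut := apply_eq_one_trans h01 hE hchar hui hit
  obtain rfl : i = t := eq_of_mem_midpoints h01 hE hchar hut
    (by simp [midpoints, hui, hit]) (by simp [midpoints, hut, htt])
  exact htt

theorem eq_one_of_isIdempotentElem [DecidableEq ι] : E = 1 := by
  have hdiag := apply_self_eq_one h01 hE hchar hrow hcol
  ext i j
  rcases eq_or_ne i j with rfl | hij
  · simp [hdiag]
  rw [one_apply_ne hij]
  refine (h01 i j).resolve_right fun h => hij ?_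
  exact eq_of_mem_midpoints h01 hE hchar h (by simp [midpoints, hdiag i, h])
    (by simp [midpoints, h, hdiag j])

end IdempotentZeroOne

end Matrix

theorem stmt6 {n : ℕ} {F : Type*} [Field F]
    (hchar : ringChar F = 0 ∨ n < ringChar F)
    (E : Matrix (Fin n) (Fin n) F)
    (hidem : E * E = E)
    (h01 : ∀ i j, E i j = 0 ∨ E i j = 1)
    (hrow : ∀ i, ∃ j, E i j ≠ 0)
    (hcol : ∀ j, ∃ i, E i j ≠ 0) :
    E = 1 := by
  classical
  have hchar' : ringChar F = 0 ∨ Fintype.card (Fin n) < ringChar F := by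
    rwa [Fintype.card_fin]
  exact Matrix.eq_one_of_isIdempotentElem h01 hidem hchar'
    (fun i => (hrow i).imp fun j => (h01 i j).resolve_left)
    (fun j => (hcol j).imp fun i => (h01 i j).resolve_left)
end

section
/- Let E be an idempotent n×n matrix of rank m ≥ 1 over a field F of characteristic zero or greater than n, with all entries in {0,1}. Then there exists a permutation matrix P such that P E P^T is the product of the n×m block matrix [I; 0; V; 0]^T arrangement (columns: identity I_m on top, then 0, then V, then 0) with the m×n block matrix [I U 0 0], where U and V are (0,1)-matrices, U has no zero column, V has no zero row, and VU is also a (0,1)-matrix. -/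
/-!
Read the (0,1)-matrix `E` as the relation `i → j :⇔ E i j = 1`. The entry `(E * E) i j` counts
the midpoints `k` of `i → k → j`; these counts are at most `n`, so they survive the cast into `F`,
and `E * E = E` says that `i → j` holds iff it has exactly one midpoint. Such a relation is
transitive and every edge has a midpoint, so on a finite set every edge `i → k` factors through a loop `a → a`; by uniqueness
of midpoints every midpoint is a loop, and distinct loops are unrelated. Hence `E` factors
through its loops, its rank is the number `m` of loops, and ordering the indices as
(loops, other successors of loops, other predecessors of loops, the rest) gives the block form.
-/

open Finset Matrix

/-- The support of an idempotent (0,1)-matrix over `ℕ`: `(N * N) i k` counts the midpoints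
`j` with `r i j ∧ r j k`, and `N * N = N` says there is one if `r i k` and none otherwise. -/
structure IsIdempotentRel {α : Type*} (r : α → α → Prop) : Prop where
  trans : ∀ {i j k}, r i j → r j k → r i k
  exists_mid : ∀ {i k}, r i k → ∃ j, r i j ∧ r j k
  mid_unique : ∀ {i j j' k}, r i j → r j k → r i j' → r j' k → j = j'

namespace IsIdempotentRel

variable {α : Type*} {r : α → α → Prop}

theorem eq_of_rel_of_refl (hr : IsIdempotentRel r) {a b : α} (ha : r a a) (hb : r b b)
    (hab : r a b) : a = b :=
  hr.mid_unique ha hab hab hb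

/-- On the midpoints of `i → k`, "`x → y`" is transitive and, without loops, irreflexive, hence
well founded; but every midpoint has a predecessor among the midpoints. -/
theorem exists_refl_mid [Finite α] (hr : IsIdempotentRel r) {i k : α} (hik : r i k) :
    ∃ a, r a a ∧ r i a ∧ r a k := by
  by_contra! h
  let s x y := r i x ∧ r x k ∧ r x y
  have : IsTrans α s :=
    ⟨fun _ _ _ ⟨hix, hxk, hxy⟩ ⟨_, _, hyz⟩ => ⟨hix, hxk, hr.trans hxy hyz⟩⟩
  have : Std.Irrefl s := ⟨fun x ⟨hix, hxk, hxx⟩ => h x hxx hix hxk⟩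
  obtain ⟨x, ⟨hix, hxk⟩, hmin⟩ :=
    (Finite.wellFounded_of_trans_of_irrefl s).has_min {x | r i x ∧ r x k} (hr.exists_mid hik)
  obtain ⟨y, hiy, hyx⟩ := hr.exists_mid hix
  exact hmin y ⟨hiy, hr.trans hyx hxk⟩ ⟨hiy, hr.trans hyx hxk, hyx⟩

theorem refl_of_mid [Finite α] (hr : IsIdempotentRel r) {i j k : α} (hij : r i j)
    (hjk : r j k) : r j j := by
  obtain ⟨a, haa, hia, haj⟩ := hr.exists_refl_mid hij
  obtain rfl := hr.mid_unique hia (hr.trans haj hjk) hij hjk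
  exact haa

end IsIdempotentRel

def quadrantEquiv {α : Type*} (p q : α → Prop) [DecidablePred p] [DecidablePred q] :
    α ≃ ({x // p x ∧ q x} ⊕ {x // p x ∧ ¬q x}) ⊕
      ({x // ¬p x ∧ q x} ⊕ {x // ¬p x ∧ ¬q x}) where
  toFun x :=
    if hp : p x then
      if hq : q x then .inl (.inl ⟨x, hp, hq⟩) else .inl (.inr ⟨x, hp, hq⟩)
    else if hq : q x then .inr (.inl ⟨x, hp, hq⟩) else .inr (.inr ⟨x, hp, hq⟩)
  invFun := Sum.elim (Sum.elim (↑) (↑)) (Sum.elim (↑) (↑))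
  left_inv x := by dsimp only; split_ifs <;> rfl
  right_inv := by
    rintro ((⟨x, hp, hq⟩ | ⟨x, hp, hq⟩) | (⟨x, hp, hq⟩ | ⟨x, hp, hq⟩)) <;> simp [hp, hq]

theorem natCast_eq_natCast_iff_of_le {R : Type*} [NonAssocRing R] {n a b : ℕ}
    (hchar : ringChar R = 0 ∨ n < ringChar R) (ha : a ≤ n) (hb : b ≤ n) :
    (a : R) = b ↔ a = b := by
  have := ringChar.charP R
  rw [CharP.natCast_eq_natCast R (ringChar R), Nat.ModEq]
  rcases hchar with h | h
  · simp [h]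
  · rw [Nat.mod_eq_of_lt (by omega), Nat.mod_eq_of_lt (by omega)]

namespace Matrix

theorem rank_mul_eq_card_of_mul_eq_one {m k F : Type*} [Fintype m] [Fintype k]
    [DecidableEq k] [Field F] (B : Matrix m k F) (C : Matrix k m F) (h : C * B = 1) :
    (B * C).rank = Fintype.card k := by
  refine le_antisymm ((rank_mul_le_left B C).trans B.rank_le_card_width) ?_
  have hCBCB : C * (B * C) * B = 1 := by rw [← Matrix.mul_assoc, h, Matrix.one_mul, h]
  calc Fintype.card k = (C * (B * C) * B).rank := by rw [hCBCB, rank_one]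
    _ ≤ (B * C).rank := (rank_mul_le_left _ _).trans (rank_mul_le_right _ _)

variable {ι F : Type*} [Field F] {E : Matrix ι ι F}

def HasLoopPred (E : Matrix ι ι F) (x : ι) : Prop := ∃ a, E a a = 1 ∧ E a x = 1

def HasLoopSucc (E : Matrix ι ι F) (x : ι) : Prop := ∃ a, E a a = 1 ∧ E x a = 1

theorem apply_eq_zero_of_refl_of_ne (h01 : ∀ i j, E i j = 0 ∨ E i j = 1)
    (hr : IsIdempotentRel fun i j => E i j = 1) {a b : ι} (ha : E a a = 1) (hb : E b b = 1)
    (hab : a ≠ b) : E a b = 0 :=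
  (h01 a b).resolve_right fun h => hab (hr.eq_of_rel_of_refl ha hb h)

theorem submatrix_eq_one_of_refl {κ : Type*} [DecidableEq κ]
    (h01 : ∀ i j, E i j = 0 ∨ E i j = 1) (hr : IsIdempotentRel fun i j => E i j = 1)
    {f : κ → ι} (hf : Function.Injective f) (hrefl : ∀ k, E (f k) (f k) = 1) :
    E.submatrix f f = 1 := by
  ext a b
  by_cases hab : a = b
  · subst hab; simpa using hrefl a
  · rw [submatrix_apply, one_apply_ne hab]
    exact apply_eq_zero_of_refl_of_ne h01 hr (hrefl a) (hrefl b) (hf.ne hab)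

variable [Fintype ι]

theorem isIdempotentRel_of_mul_self_eq
    (hchar : ringChar F = 0 ∨ Fintype.card ι < ringChar F) (h01 : ∀ i j, E i j = 0 ∨ E i j = 1)
    (hidem : E * E = E) :
    IsIdempotentRel fun i j => E i j = 1 := by
  classical
  have hcount (i j : ι) : #{k | E i k = 1 ∧ E k j = 1} = if E i j = 1 then 1 else 0 := by
    have hpos : 0 < Fintype.card ι := Fintype.card_pos_iff.2 ⟨i⟩
    rw [← natCast_eq_natCast_iff_of_le (R := F) hchar (card_le_univ _)
      (by split_ifs <;> omega), natCast_card_filter]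
    calc ∑ k, (if E i k = 1 ∧ E k j = 1 then 1 else 0 : F) = (E * E) i j := by
          rw [mul_apply]
          refine sum_congr rfl fun k _ => ?_
          rcases h01 i k with h | h <;> rcases h01 k j with h' | h' <;> simp [h, h']
      _ = _ := by rw [hidem]; rcases h01 i j with h | h <;> simp [h]
  refine ⟨fun {i j k} hij hjk => ?_, fun {i k} hik => ?_, fun {i j j' k} h₁ h₂ h₃ h₄ => ?_⟩
  · by_contra h
    have hempty := hcount i k
    rw [if_neg h, card_eq_zero, filter_eq_empty_iff] at hempty
    exact hempty (mem_univ j) ⟨hij, hjk⟩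
  · have hone := hcount i k
    rw [if_pos hik, card_eq_one] at hone
    obtain ⟨j, hj⟩ := hone
    exact ⟨j, by simpa using hj.ge (mem_singleton_self j)⟩
  · have hle : #{k' | E i k' = 1 ∧ E k' k = 1} ≤ 1 :=
      (hcount i k).trans_le (by split_ifs <;> simp)
    exact card_le_one.1 hle j (by simp [h₁, h₂]) j' (by simp [h₃, h₄])

theorem apply_eq_zero_of_not_hasLoopPred (h01 : ∀ i j, E i j = 0 ∨ E i j = 1)
    (hr : IsIdempotentRel fun i j => E i j = 1) {x y : ι} (hy : ¬E.HasLoopPred y) : E x y = 0 :=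
  (h01 x y).resolve_right fun hxy =>
    let ⟨a, haa, _, hay⟩ := hr.exists_refl_mid hxy
    hy ⟨a, haa, hay⟩

theorem apply_eq_zero_of_not_hasLoopSucc (h01 : ∀ i j, E i j = 0 ∨ E i j = 1)
    (hr : IsIdempotentRel fun i j => E i j = 1) {x y : ι} (hx : ¬E.HasLoopSucc x) : E x y = 0 :=
  (h01 x y).resolve_right fun hxy =>
    let ⟨a, haa, hxa, _⟩ := hr.exists_refl_mid hxy
    hx ⟨a, haa, hxa⟩

theorem hasLoopPred_and_hasLoopSucc_iff (hr : IsIdempotentRel fun i j => E i j = 1) {x : ι} :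
    E.HasLoopPred x ∧ E.HasLoopSucc x ↔ E x x = 1 :=
  ⟨fun ⟨⟨_, _, hax⟩, ⟨_, _, hxb⟩⟩ => hr.refl_of_mid hax hxb,
    fun h => ⟨⟨x, h, h⟩, ⟨x, h, h⟩⟩⟩

/-- Every midpoint is a loop, so the other terms of `(E * E) i j` vanish. -/
theorem sum_subtype_mul_apply_eq (h01 : ∀ i j, E i j = 0 ∨ E i j = 1)
    (hr : IsIdempotentRel fun i j => E i j = 1) (hidem : E * E = E) (P : ι → Prop)
    [DecidablePred P] (hP : ∀ k, E k k = 1 → P k) (i j : ι) :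
    ∑ k : {k // P k}, E i k * E k j = E i j := by
  have hmid (k : ι) (hk : ¬P k) : E i k * E k j = 0 := by
    by_contra h
    obtain ⟨hik, hkj⟩ := mul_ne_zero_iff.1 h
    exact hk (hP k (hr.refl_of_mid ((h01 i k).resolve_left hik) ((h01 k j).resolve_left hkj)))
  calc ∑ k : {k // P k}, E i k * E k j
        = ∑ k : {k // P k}, E i k * E k j + ∑ k : {k // ¬P k}, E i k * E k j := by
          rw [Fintype.sum_eq_zero (fun k : {k // ¬P k} => E i k * E k j) fun k => hmid k.1 k.2,
            add_zero]
    _ = (E * E) i j := Fintype.sum_subtype_add_sum_subtype P fun k => E i k * E k j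
    _ = E i j := by rw [hidem]

theorem rank_eq_card_loops (h01 : ∀ i j, E i j = 0 ∨ E i j = 1)
    (hr : IsIdempotentRel fun i j => E i j = 1) (hidem : E * E = E) :
    E.rank = Nat.card {k // E k k = 1} := by
  classical
  let B : Matrix ι {k // E k k = 1} F := E.submatrix id (↑)
  let C : Matrix {k // E k k = 1} ι F := E.submatrix (↑) id
  have hBC : B * C = E := by
    ext i j
    exact sum_subtype_mul_apply_eq h01 hr hidem _ (fun _ => id) i j
  have hCB : C * B = 1 := by
    rw [← submatrix_mul _ _ _ _ _ Function.bijective_id, hidem]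
    exact submatrix_eq_one_of_refl h01 hr Subtype.val_injective fun k => k.2
  rw [Nat.card_eq_fintype_card, ← rank_mul_eq_card_of_mul_eq_one _ _ hCB, hBC]

theorem exists_submatrix_eq_fromBlocks (h01 : ∀ i j, E i j = 0 ∨ E i j = 1)
    (hr : IsIdempotentRel fun i j => E i j = 1) (hidem : E * E = E) {m : ℕ}
    (hm : Nat.card {k // E k k = 1} = m) :
    ∃ (s t q : ℕ) (e : ι ≃ (Fin m ⊕ Fin s) ⊕ (Fin t ⊕ Fin q))
      (U : Matrix (Fin m) (Fin s) F) (V : Matrix (Fin t) (Fin m) F),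
      (∀ i j, U i j = 0 ∨ U i j = 1) ∧
      (∀ i j, V i j = 0 ∨ V i j = 1) ∧
      (∀ j, ∃ i, U i j ≠ 0) ∧
      (∀ i, ∃ j, V i j ≠ 0) ∧
      (∀ i j, (V * U) i j = 0 ∨ (V * U) i j = 1) ∧
      E.submatrix e.symm e.symm =
        Matrix.fromBlocks (Matrix.fromBlocks 1 U 0 0) 0
          (Matrix.fromBlocks V (V * U) 0 0) 0 := by
  classical
  have hloop {x : ι} := hasLoopPred_and_hasLoopSucc_iff hr (x := x)
  have hcore : Fintype.card {x // E.HasLoopPred x ∧ E.HasLoopSucc x} = m := by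
    rw [← hm, Nat.card_eq_fintype_card]
    exact Fintype.card_congr (Equiv.subtypeEquivRight fun _ => hloop)
  let eA := Fintype.equivFinOfCardEq hcore
  let eS := Fintype.equivFin {x // E.HasLoopPred x ∧ ¬E.HasLoopSucc x}
  let eT := Fintype.equivFin {x // ¬E.HasLoopPred x ∧ E.HasLoopSucc x}
  let eQ := Fintype.equivFin {x // ¬E.HasLoopPred x ∧ ¬E.HasLoopSucc x}
  let e := (quadrantEquiv _ _).trans ((eA.sumCongr eS).sumCongr (eT.sumCongr eQ))
  let fA : Fin m → ι := Subtype.val ∘ eA.symm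
  let fS : Fin _ → ι := Subtype.val ∘ eS.symm
  let fT : Fin _ → ι := Subtype.val ∘ eT.symm
  let U := E.submatrix fA fS
  let V := E.submatrix fT fA
  have hA : E.submatrix fA fA = 1 :=
    submatrix_eq_one_of_refl h01 hr (Subtype.val_injective.comp eA.symm.injective)
      fun i => hloop.1 (eA.symm i).2
  have hVU : V * U = E.submatrix fT fS := by
    ext i j
    rw [mul_apply, submatrix_apply, ← sum_subtype_mul_apply_eq h01 hr hidem _ fun _ => hloop.2]
    exact eA.symm.sum_comp fun a => E (fT i) a * E a (fS j)
  refine ⟨_, _, _, e, U, V, fun _ _ => h01 _ _, fun _ _ => h01 _ _, fun j => ?_, fun i => ?_,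
    hVU ▸ fun _ _ => h01 _ _, ?_⟩
  · obtain ⟨a, haa, has⟩ := (eS.symm j).2.1
    exact ⟨eA ⟨a, hloop.2 haa⟩, by simp [U, fA, fS, has]⟩
  · obtain ⟨a, haa, hta⟩ := (eT.symm i).2.2
    exact ⟨eA ⟨a, hloop.2 haa⟩, by simp [V, fA, fT, hta]⟩
  · -- Columns without a loop predecessor and rows without a loop successor vanish.
    ext (((i | i) | (i | i))) (((j | j) | (j | j)))
    all_goals first
      | rfl
      | exact congr_fun₂ hA i j
      | exact (congr_fun₂ hVU i j).symm
      | exact apply_eq_zero_of_not_hasLoopPred h01 hr (eT.symm j).2.1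
      | exact apply_eq_zero_of_not_hasLoopPred h01 hr (eQ.symm j).2.1
      | exact apply_eq_zero_of_not_hasLoopSucc h01 hr (eS.symm i).2.2
      | exact apply_eq_zero_of_not_hasLoopSucc h01 hr (eQ.symm i).2.2

end Matrix

theorem stmt7_general {n : ℕ} {F : Type*} [Field F]
    (hchar : ringChar F = 0 ∨ n < ringChar F)
    (E : Matrix (Fin n) (Fin n) F)
    (hidem : E * E = E)
    (h01 : ∀ i j, E i j = 0 ∨ E i j = 1)
    (m : ℕ) (hrank : E.rank = m) :
    ∃ (s t q : ℕ) (e : Fin n ≃ (Fin m ⊕ Fin s) ⊕ (Fin t ⊕ Fin q))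
      (U : Matrix (Fin m) (Fin s) F) (V : Matrix (Fin t) (Fin m) F),
      (∀ i j, U i j = 0 ∨ U i j = 1) ∧
      (∀ i j, V i j = 0 ∨ V i j = 1) ∧
      (∀ j, ∃ i, U i j ≠ 0) ∧
      (∀ i, ∃ j, V i j ≠ 0) ∧
      (∀ i j, (V * U) i j = 0 ∨ (V * U) i j = 1) ∧
      E.submatrix e.symm e.symm =
        Matrix.fromBlocks (Matrix.fromBlocks 1 U 0 0) 0
          (Matrix.fromBlocks V (V * U) 0 0) 0 := by
  have hr := Matrix.isIdempotentRel_of_mul_self_eq (by simpa using hchar) h01 hidem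
  exact Matrix.exists_submatrix_eq_fromBlocks h01 hr hidem
    ((Matrix.rank_eq_card_loops h01 hr hidem).symm.trans hrank)

theorem stmt7 {n : ℕ} {F : Type*} [Field F]
    (hchar : ringChar F = 0 ∨ n < ringChar F)
    (E : Matrix (Fin n) (Fin n) F)
    (hidem : E * E = E)
    (h01 : ∀ i j, E i j = 0 ∨ E i j = 1)
    (m : ℕ) (hm : 1 ≤ m) (hrank : E.rank = m) :
    ∃ (s t q : ℕ) (e : Fin n ≃ (Fin m ⊕ Fin s) ⊕ (Fin t ⊕ Fin q))
      (U : Matrix (Fin m) (Fin s) F) (V : Matrix (Fin t) (Fin m) F),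
      (∀ i j, U i j = 0 ∨ U i j = 1) ∧
      (∀ i j, V i j = 0 ∨ V i j = 1) ∧
      (∀ j, ∃ i, U i j ≠ 0) ∧
      (∀ i, ∃ j, V i j ≠ 0) ∧
      (∀ i j, (V * U) i j = 0 ∨ (V * U) i j = 1) ∧
      E.submatrix e.symm e.symm =
        Matrix.fromBlocks (Matrix.fromBlocks 1 U 0 0) 0
          (Matrix.fromBlocks V (V * U) 0 0) 0 :=
  stmt7_general hchar E hidem h01 m hrank
end

section
/- Let F be a field of prime characteristic p and let n > p. Then the n×n matrix whose upper-left (p+1)×(p+1) block consists entirely of ones and is zero elsewhere is an idempotent (0,1)-matrix that is not equal to any matrix of the form P^T [[I, U, 0, 0],[0,0,0,0],[V, VU, 0,0],[0,0,0,0]] P with P a permutation matrix, U having no zero column, and V having no zero row. In particular it is idempotent: its square equals itself. -/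
/-!
In characteristic `p` the all-ones `(p+1) × (p+1)` block `J` satisfies `J² = (p+1) J = J`.
It is not of the given block form: the only nonzero diagonal entries of that form lie in its
identity block, where off-diagonal entries vanish, whereas the indices `0 ≠ 1` of `J` (both `≤ p`) have
`J 0 0`, `J 1 1` and `J 0 1` all nonzero.
-/

open Matrix Finset

theorem Fin.card_filter_val_le {n p : ℕ} (h : p < n) : #{i : Fin n | i.val ≤ p} = p + 1 := by
  simp only [Nat.le_iff_lt_add_one, Fin.card_filter_val_lt]
  omega

theorem Matrix.onesBlock_mul_self {ι R : Type*} [Fintype ι] [NonAssocSemiring R] (P : ι → Prop)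
    [DecidablePred P] :
    (of fun i j => if P i ∧ P j then (1 : R) else 0) * (of fun i j => if P i ∧ P j then 1 else 0)
      = (#{i | P i} : R) • of fun i j => if P i ∧ P j then 1 else 0 := by
  ext i j
  by_cases hi : P i <;> by_cases hj : P j <;> simp +contextual [mul_apply, hi, hj, Finset.sum_boole]

section BlockForm

variable {m s t q R : Type*} [Fintype m] [DecidableEq m] [Semiring R]

/-- The matrix `[[I, U, 0, 0], [0, 0, 0, 0], [V, VU, 0, 0], [0, 0, 0, 0]]`. -/
def idempotentBlockForm (U : Matrix m s R) (V : Matrix t m R) :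
    Matrix ((m ⊕ s) ⊕ (t ⊕ q)) ((m ⊕ s) ⊕ (t ⊕ q)) R :=
  fromBlocks (fromBlocks 1 U 0 0) 0 (fromBlocks V (V * U) 0 0) 0

theorem idempotentBlockForm_eq_of_apply_ne_zero (U : Matrix m s R) (V : Matrix t m R)
    {x y : (m ⊕ s) ⊕ (t ⊕ q)} (hxx : idempotentBlockForm U V x x ≠ 0)
    (hyy : idempotentBlockForm U V y y ≠ 0) (hxy : idempotentBlockForm U V x y ≠ 0) :
    x = y := by
  rcases x with (k | _) | (_ | _) <;> rcases y with (l | _) | (_ | _) <;>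
    simp_all [idempotentBlockForm, one_apply]

theorem eq_of_submatrix_eq_idempotentBlockForm {ι : Type*} {M : Matrix ι ι R}
    {e : ι ≃ (m ⊕ s) ⊕ (t ⊕ q)} {U : Matrix m s R} {V : Matrix t m R}
    (h : M.submatrix e.symm e.symm = idempotentBlockForm U V) {a b : ι}
    (haa : M a a ≠ 0) (hbb : M b b ≠ 0) (hab : M a b ≠ 0) : a = b := by
  have hM : ∀ x y, M x y = idempotentBlockForm U V (e x) (e y) := fun x y => by
    simp [← h]
  rw [hM] at haa hbb hab
  exact e.injective (idempotentBlockForm_eq_of_apply_ne_zero U V haa hbb hab)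

end BlockForm

theorem stmt8 {F : Type*} [Field F] (p n : ℕ) (hp : p.Prime)
    (hcharp : CharP F p) (hn : p < n)
    (M : Matrix (Fin n) (Fin n) F)
    (hM : M = fun i j => if i.val ≤ p ∧ j.val ≤ p then 1 else 0) :
    M * M = M ∧ (∀ i j, M i j = 0 ∨ M i j = 1) ∧
    ¬ ∃ (m s t q : ℕ) (e : Fin n ≃ (Fin m ⊕ Fin s) ⊕ (Fin t ⊕ Fin q))
        (U : Matrix (Fin m) (Fin s) F) (V : Matrix (Fin t) (Fin m) F),
        (∀ j, ∃ i, U i j ≠ 0) ∧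
        (∀ i, ∃ j, V i j ≠ 0) ∧
        M.submatrix e.symm e.symm =
          Matrix.fromBlocks (Matrix.fromBlocks 1 U 0 0) 0
            (Matrix.fromBlocks V (V * U) 0 0) 0 := by
  have hentry : ∀ i j : Fin n, M i j = if i.val ≤ p ∧ j.val ≤ p then 1 else 0 := by
    subst hM; exact fun _ _ => rfl
  have hcard : (#{i : Fin n | i.val ≤ p} : F) = 1 := by
    rw [Fin.card_filter_val_le hn, Nat.cast_succ, CharP.cast_eq_zero, zero_add]
  refine ⟨?_, fun i j => by rw [hentry]; split_ifs <;> simp, ?_⟩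
  · rw [show M = of fun i j => if i.val ≤ p ∧ j.val ≤ p then 1 else 0 from hM,
      onesBlock_mul_self, hcard, one_smul]
  rintro ⟨m, s, t, q, e, U, V, -, -, hform⟩
  have hp_one_lt := hp.one_lt
  have hne : ∀ i j : Fin n, i.val ≤ 1 → j.val ≤ 1 → M i j ≠ 0 := fun i j hi hj => by
    rw [hentry, if_pos ⟨by omega, by omega⟩]
    exact one_ne_zero
  have hzero_eq_one := eq_of_submatrix_eq_idempotentBlockForm hform (a := ⟨0, by omega⟩)
    (b := ⟨1, by omega⟩) (hne _ _ zero_le_one zero_le_one) (hne _ _ le_rfl le_rfl)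
    (hne _ _ zero_le_one le_rfl)
  exact absurd (congrArg Fin.val hzero_eq_one) zero_ne_one
end

section
/- Let A be a nonzero n×n matrix over a field F of characteristic 0 or greater than n such that A^r = A^{(r)} for all positive integers r. Then there exist (0,1)-vectors u_1,…,u_m and v_1,…,v_m in F^n with u_i^T v_i = 1 and u_i^T v_j = 0 for i ≠ j, and nonzero scalars μ_1,…,μ_m ∈ F (m = rank A), such that A = Σ_{i=1}^m μ_i v_i u_i^T. -/
/-!
Write `E c` for the `0/1` matrix marking the entries of `A` equal to `c`. The hypothesis says
`A ^ r = ∑ c ≠ 0, c ^ r • E c` for all `r ≥ 1`, hence `q(A) = ∑ c ≠ 0, q(c) • E c` for every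
polynomial with `q(0) = 0`; evaluating Lagrange basis polynomials shows that the `E c` with `c ≠ 0`
are pairwise orthogonal idempotents.

For a `0/1` idempotent `E`, the entry `(E * E) i j` counts the `k` with `E i k = E k j = 1`, and as
`char F` is `0` or exceeds `n` this count equals `E i j ∈ {0, 1}`. This forces
`E = ∑ (column d) (row d)` over the `d` with `E d d = 1`, with row `d` and column `d'` biorthogonal.
Summing `c • E c` over `c` writes `A` as `∑ A d d • v d u dᵀ` over the `d` with `A d d ≠ 0`, and
biorthogonality makes the number of terms the rank.
-/

open Finset Matrix
open scoped Classical

theorem natCast_injOn_Iic_of_ringChar {R : Type*} [NonAssocRing R] {n : ℕ}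
    (h : ringChar R = 0 ∨ n < ringChar R) : (Set.Iic n).InjOn ((↑) : ℕ → R) := by
  rcases h with h | h
  · have : CharP R 0 := h ▸ ringChar.charP R
    have : CharZero R := CharP.charP_to_charZero R
    exact Nat.cast_injective.injOn
  · exact (CharP.natCast_injOn_Iio R (ringChar R)).mono fun a ha => lt_of_le_of_lt ha h

section Midpoints

variable {ι : Type*} [Fintype ι] {R : ι → ι → Prop}

def HasUniqueMidpoints (R : ι → ι → Prop) : Prop :=
  ∀ i j, #{k | R i k ∧ R k j} = if R i j then 1 else 0

namespace HasUniqueMidpoints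

variable {i j k l : ι}

theorem trans (hR : HasUniqueMidpoints R) (hik : R i k) (hkj : R k j) : R i j := by
  by_contra hij
  have := hR i j
  rw [if_neg hij, card_eq_zero, filter_eq_empty_iff] at this
  exact this (mem_univ k) ⟨hik, hkj⟩

theorem exists_midpoint (hR : HasUniqueMidpoints R) (hij : R i j) : ∃ k, R i k ∧ R k j := by
  obtain ⟨k, hk⟩ := card_pos.mp (by rw [hR i j, if_pos hij]; exact one_pos)
  exact ⟨k, (mem_filter.mp hk).2⟩

theorem midpoint_unique (hR : HasUniqueMidpoints R) (hik : R i k) (hkj : R k j) (hil : R i l)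
    (hlj : R l j) : k = l := by
  have hle : #{k | R i k ∧ R k j} ≤ 1 := by rw [hR i j]; split_ifs <;> simp
  exact card_le_one.mp hle k (by simp [hik, hkj]) l (by simp [hil, hlj])

theorem rel_self_of_rel_of_rel (hR : HasUniqueMidpoints R) (hik : R i k) (hkj : R k j) :
    R k k := by
  obtain ⟨l, hil, hlk⟩ := hR.exists_midpoint hik
  obtain rfl := hR.midpoint_unique hik hkj hil (hR.trans hlk hkj)
  exact hlk

theorem not_rel_of_rel_self (hR : HasUniqueMidpoints R) (hi : R i i) (hj : R j j) (hne : i ≠ j) :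
    ¬ R i j := fun hij =>
  hne (hR.midpoint_unique hi hij hij hj)

theorem card_filter_rel_self_and_rel_and_rel (hR : HasUniqueMidpoints R) (i j : ι) :
    #{k | R k k ∧ R i k ∧ R k j} = if R i j then 1 else 0 := by
  rw [← hR i j]
  congr 1
  exact filter_congr fun k _ => and_iff_right_of_imp fun h => hR.rel_self_of_rel_of_rel h.1 h.2

end HasUniqueMidpoints

end Midpoints

section RelMatrix

variable {l m n : Type*}

noncomputable def relMatrix (F : Type*) [Zero F] [One F] (R : m → n → Prop) : Matrix m n F :=
  of fun i j => if R i j then 1 else 0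

variable {F : Type*} [NonAssocSemiring F]

theorem relMatrix_apply_eq_zero_or_eq_one (R : m → n → Prop) (i : m) (j : n) :
    relMatrix F R i j = 0 ∨ relMatrix F R i j = 1 := by
  by_cases R i j <;> simp [relMatrix, *]

variable [Fintype m]

theorem relMatrix_mul_apply (R : l → m → Prop) (R' : m → n → Prop) (i : l) (j : n) :
    (relMatrix F R * relMatrix F R') i j = #{k | R i k ∧ R' k j} := by
  simp only [relMatrix, mul_apply, of_apply, ite_mul, one_mul, zero_mul, ← ite_and, sum_boole]

variable {R : m → m → Prop}

theorem hasUniqueMidpoints_of_relMatrix_mul_self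
    (hF : (Set.Iic (Fintype.card m)).InjOn ((↑) : ℕ → F))
    (h : relMatrix F R * relMatrix F R = relMatrix F R) : HasUniqueMidpoints R := by
  -- both sides of `(E * E) i j = E i j` are casts of naturals `≤ card m`, so they agree in `ℕ`
  intro i j
  have hij := congrFun₂ h i j
  rw [relMatrix_mul_apply] at hij
  refine hF (card_le_univ _) ?_ (hij.trans ?_)
  · split_ifs
    exacts [Fintype.card_pos_iff.mpr ⟨i⟩, Nat.zero_le _]
  · by_cases R i j <;> simp [relMatrix, *]

theorem relMatrix_eq_sum_vecMulVec (hR : HasUniqueMidpoints R) :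
    relMatrix F R = ∑ d with R d d, vecMulVec ((relMatrix F R)ᵀ d) (relMatrix F R d) := by
  ext i j
  simp only [Matrix.sum_apply, vecMulVec_apply, transpose_apply, relMatrix, of_apply, ite_mul,
    one_mul, zero_mul, ← ite_and, sum_boole]
  rw [filter_filter, hR.card_filter_rel_self_and_rel_and_rel, Nat.cast_ite, Nat.cast_one,
    Nat.cast_zero]

end RelMatrix

section Interpolation

open Polynomial

variable {F M : Type*} [Field F] [Ring M] [Algebra F M] {a : M} {S : Finset F} {E : F → M}

theorem aeval_X_mul_eq_sum_smul (hpow : ∀ r, 1 ≤ r → a ^ r = ∑ c ∈ S, c ^ r • E c) (q : F[X]) :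
    aeval a (X * q) = ∑ c ∈ S, (c * q.eval c) • E c := by
  induction q using Polynomial.induction_on' with
  | add p q hp hq => simp only [mul_add, map_add, hp, hq, eval_add, add_smul, sum_add_distrib]
  | monomial k b =>
    rw [X_mul_monomial, aeval_monomial, hpow (k + 1) k.succ_pos, Algebra.algebraMap_eq_smul_one,
      smul_one_mul, smul_sum]
    simp only [eval_monomial, smul_smul, pow_succ]
    congr! 2
    ring

theorem aeval_eq_sum_smul (hpow : ∀ r, 1 ≤ r → a ^ r = ∑ c ∈ S, c ^ r • E c) {q : F[X]}
    (hq : q.eval 0 = 0) : aeval a q = ∑ c ∈ S, q.eval c • E c := by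
  obtain ⟨p, rfl⟩ := (X_dvd_iff (f := q)).mpr (by rwa [coeff_zero_eq_eval_zero])
  simp only [aeval_X_mul_eq_sum_smul hpow, eval_mul, eval_X]

theorem mul_eq_ite_of_pow_eq_sum_smul (h0 : 0 ∉ S)
    (hpow : ∀ r, 1 ≤ r → a ^ r = ∑ c ∈ S, c ^ r • E c) {c c' : F} (hc : c ∈ S) (hc' : c' ∈ S) :
    E c * E c' = if c = c' then E c else 0 := by
  -- `P c` is the Lagrange basis polynomial of `c` on `S ∪ {0}`, so that `aeval a (P c) = E c`
  set P : F → F[X] := fun c => Lagrange.basis (insert 0 S) id c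
  have hP : ∀ c ∈ S, ∀ b ∈ insert 0 S, (P c).eval b = if c = b then 1 else 0 := by
    intro c hc b hb
    split_ifs with hcb
    · exact hcb ▸ Lagrange.eval_basis_self Function.injective_id.injOn (mem_insert_of_mem hc)
    · exact Lagrange.eval_basis_of_ne (s := insert 0 S) (v := id) hcb hb
  have hP0 : ∀ c ∈ S, (P c).eval 0 = 0 := fun c hc => by
    rw [hP c hc 0 (mem_insert_self 0 S), if_neg (ne_of_mem_of_not_mem hc h0)]
  have hPS : ∀ c ∈ S, ∀ b ∈ S, (P c).eval b • E b = if c = b then E b else 0 := fun c hc b hb => by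
    rw [hP c hc b (mem_insert_of_mem hb), ite_smul, one_smul, zero_smul]
  have hE : ∀ c ∈ S, E c = aeval a (P c) := fun c hc => by
    rw [aeval_eq_sum_smul hpow (hP0 c hc), sum_congr rfl (hPS c hc), sum_ite_eq, if_pos hc]
  calc E c * E c' = aeval a (P c * P c') := by rw [map_mul, ← hE c hc, ← hE c' hc']
    _ = ∑ b ∈ S, (P c').eval b • if c = b then E b else 0 := by
        rw [aeval_eq_sum_smul hpow (by rw [eval_mul, hP0 c hc, zero_mul])]
        refine sum_congr rfl fun b hb => ?_
        rw [eval_mul, mul_comm, mul_smul, hPS c hc b hb]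
    _ = if c = c' then E c else 0 := by
        simp only [smul_ite, smul_zero, sum_ite_eq, if_pos hc, hPS c' hc' c hc]
        exact if_congr eq_comm rfl rfl

end Interpolation

theorem rank_sum_smul_vecMulVec {ι κ F : Type*} [Fintype ι] [Fintype κ] [DecidableEq κ] [Field F]
    (u v : κ → ι → F) {μ : κ → F} (hμ : ∀ k, μ k ≠ 0)
    (huv : ∀ k l, u k ⬝ᵥ v l = if k = l then 1 else 0) :
    (∑ k, μ k • vecMulVec (v k) (u k)).rank = Fintype.card κ := by
  have hsum : ∑ k, μ k • vecMulVec (v k) (u k) = (of v)ᵀ * diagonal μ * of u := by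
    ext i j
    simp [Matrix.sum_apply, mul_apply, vecMulVec_apply, diagonal, mul_comm, mul_left_comm]
  have hUV : of u * (of v)ᵀ = 1 := by
    ext k l
    rw [mul_apply', one_apply]
    exact huv k l
  have hD : (diagonal μ).rank = Fintype.card κ :=
    rank_of_isUnit _ (isUnit_diagonal.mpr (Pi.isUnit_iff.mpr fun k => (hμ k).isUnit))
  rw [hsum]
  refine le_antisymm ((rank_mul_le_left _ _).trans ((rank_mul_le_right _ _).trans hD.le)) ?_
  calc Fintype.card κ = (of u * ((of v)ᵀ * diagonal μ * of u) * (of v)ᵀ).rank := by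
        rw [← hD, ← Matrix.mul_assoc, ← Matrix.mul_assoc, hUV, Matrix.one_mul, Matrix.mul_assoc,
          hUV, Matrix.mul_one]
    _ ≤ _ := (rank_mul_le_left _ _).trans (rank_mul_le_right _ _)

section LevelMatrix

variable {m n ι F : Type*}

noncomputable def levelMatrix [Zero F] [One F] (A : Matrix m n F) (c : F) : Matrix m n F :=
  relMatrix F (A · · = c)

theorem map_eq_sum_smul_levelMatrix [Semiring F] (A : Matrix m n F) {f : F → F} (hf : f 0 = 0)
    {S : Finset F} (hS : ∀ i j, A i j ≠ 0 → A i j ∈ S) :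
    A.map f = ∑ c ∈ S, f c • levelMatrix A c := by
  ext i j
  simp only [map_apply, Matrix.sum_apply, Matrix.smul_apply, levelMatrix, relMatrix, of_apply,
    smul_eq_mul, mul_ite, mul_one, mul_zero, sum_ite_eq]
  split_ifs with h
  · rfl
  · rw [not_not.mp (mt (hS i j) h), hf]

variable [Fintype ι] [DecidableEq ι] [Field F] {A : Matrix ι ι F}

theorem levelMatrix_mul_levelMatrix (hpow : ∀ r, 1 ≤ r → A ^ r = A.map (· ^ r)) {c c' : F}
    (hc : c ≠ 0) (hc' : c' ≠ 0) :
    levelMatrix A c * levelMatrix A c' = if c = c' then levelMatrix A c else 0 := by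
  set S := (insert c (insert c' (image₂ A univ univ))).erase 0
  have hS : ∀ i j, A i j ≠ 0 → A i j ∈ S := fun i j h =>
    mem_erase.mpr ⟨h, mem_insert_of_mem <| mem_insert_of_mem <|
      mem_image₂_of_mem (mem_univ i) (mem_univ j)⟩
  refine mul_eq_ite_of_pow_eq_sum_smul (notMem_erase 0 _)
    (fun r hr => (hpow r hr).trans (map_eq_sum_smul_levelMatrix A (zero_pow (by omega)) hS))
    (by simp [hc]) (by simp [hc'])

theorem hasUniqueMidpoints_of_pow_eq_map_pow
    (hF : (Set.Iic (Fintype.card ι)).InjOn ((↑) : ℕ → F))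
    (hpow : ∀ r, 1 ≤ r → A ^ r = A.map (· ^ r)) {c : F} (hc : c ≠ 0) :
    HasUniqueMidpoints (A · · = c) :=
  hasUniqueMidpoints_of_relMatrix_mul_self hF
    ((levelMatrix_mul_levelMatrix hpow hc hc).trans (if_pos rfl))

theorem levelMatrix_dotProduct_levelMatrix
    (hF : (Set.Iic (Fintype.card ι)).InjOn ((↑) : ℕ → F))
    (hpow : ∀ r, 1 ≤ r → A ^ r = A.map (· ^ r)) {d d' : ι} (hd : A d d ≠ 0) (hd' : A d' d' ≠ 0) :
    levelMatrix A (A d d) d ⬝ᵥ (levelMatrix A (A d' d'))ᵀ d' = if d = d' then 1 else 0 := by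
  change (levelMatrix A (A d d) * levelMatrix A (A d' d')) d d' = _
  rw [levelMatrix_mul_levelMatrix hpow hd hd']
  by_cases hdd : d = d'
  · subst hdd
    simp [levelMatrix, relMatrix]
  rw [if_neg hdd]
  split_ifs with hc
  · simp only [levelMatrix, relMatrix, of_apply, ite_eq_right_iff, one_ne_zero, imp_false]
    exact (hasUniqueMidpoints_of_pow_eq_map_pow hF hpow hd).not_rel_of_rel_self rfl hc.symm hdd
  · rfl

theorem eq_sum_smul_vecMulVec_levelMatrix
    (hF : (Set.Iic (Fintype.card ι)).InjOn ((↑) : ℕ → F))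
    (hpow : ∀ r, 1 ≤ r → A ^ r = A.map (· ^ r)) :
    A = ∑ d with A d d ≠ 0,
      A d d • vecMulVec ((levelMatrix A (A d d))ᵀ d) (levelMatrix A (A d d) d) := by
  set S := (image₂ A univ univ).erase 0
  have hS : ∀ i j, A i j ≠ 0 → A i j ∈ S := fun i j h =>
    mem_erase.mpr ⟨h, mem_image₂_of_mem (mem_univ i) (mem_univ j)⟩
  conv_lhs => rw [← A.map_id, map_eq_sum_smul_levelMatrix A rfl hS]
  rw [← sum_fiberwise_of_maps_to (g := fun d => A d d) (t := S)
    fun d hd => hS d d (mem_filter.mp hd).2]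
  refine sum_congr rfl fun c hc => ?_
  have hc0 := ne_of_mem_erase hc
  rw [levelMatrix, relMatrix_eq_sum_vecMulVec (hasUniqueMidpoints_of_pow_eq_map_pow hF hpow hc0),
    smul_sum, filter_filter]
  refine sum_congr (filter_congr fun d _ => ?_) fun d hd => ?_
  · exact (and_iff_right_of_imp fun h => h ▸ hc0).symm
  · rw [(mem_filter.mp hd).2.2]
    rfl

end LevelMatrix

theorem stmt15_general {n : ℕ} {F : Type*} [Field F]
    (hchar : ringChar F = 0 ∨ n < ringChar F)
    (A : Matrix (Fin n) (Fin n) F)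
    (h : ∀ r : ℕ, 1 ≤ r → A ^ r = A.map (· ^ r)) :
    ∃ (m : ℕ) (_ : m = A.rank) (u v : Fin m → Fin n → F) (μ : Fin m → F),
      (∀ i j, u i j = 0 ∨ u i j = 1) ∧
      (∀ i j, v i j = 0 ∨ v i j = 1) ∧
      (∀ i, dotProduct (u i) (v i) = 1) ∧
      (∀ i j, i ≠ j → dotProduct (u i) (v j) = 0) ∧
      (∀ i, μ i ≠ 0) ∧
      A = ∑ i, μ i • Matrix.vecMulVec (v i) (u i) := by
  have hF : (Set.Iic (Fintype.card (Fin n))).InjOn ((↑) : ℕ → F) := by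
    simpa using natCast_injOn_Iic_of_ringChar hchar
  set e := (Fintype.equivFin {d // A d d ≠ 0}).symm
  set u : Fin _ → Fin n → F := fun k => levelMatrix A (A (e k) (e k)) (e k)
  set v : Fin _ → Fin n → F := fun k => (levelMatrix A (A (e k) (e k)))ᵀ (e k)
  set μ : Fin _ → F := fun k => A (e k) (e k)
  have huv : ∀ k l, u k ⬝ᵥ v l = if k = l then 1 else 0 := fun k l => by
    simp [u, v, levelMatrix_dotProduct_levelMatrix hF h (e k).2 (e l).2, Subtype.val_inj]
  have hA : A = ∑ k, μ k • vecMulVec (v k) (u k) :=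
    (eq_sum_smul_vecMulVec_levelMatrix hF h).trans
      ((sum_subtype _ (fun _ => mem_filter_univ _) _).trans (e.sum_comp _).symm)
  refine ⟨_, ?_, u, v, μ, fun k j => relMatrix_apply_eq_zero_or_eq_one _ _ _,
    fun k j => relMatrix_apply_eq_zero_or_eq_one _ _ _, fun k => by simpa using huv k k,
    fun k l hkl => by simpa [hkl] using huv k l, fun k => (e k).2, hA⟩
  have hrank := rank_sum_smul_vecMulVec u v (fun k => (e k).2) huv
  rw [← hA, Fintype.card_fin] at hrank
  exact hrank.symm

theorem stmt15 {n : ℕ} {F : Type*} [Field F]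
    (hchar : ringChar F = 0 ∨ n < ringChar F)
    (A : Matrix (Fin n) (Fin n) F) (hA : A ≠ 0)
    (h : ∀ r : ℕ, 1 ≤ r → A ^ r = A.map (· ^ r)) :
    ∃ (m : ℕ) (_ : m = A.rank) (u v : Fin m → Fin n → F) (μ : Fin m → F),
      (∀ i j, u i j = 0 ∨ u i j = 1) ∧
      (∀ i j, v i j = 0 ∨ v i j = 1) ∧
      (∀ i, dotProduct (u i) (v i) = 1) ∧
      (∀ i j, i ≠ j → dotProduct (u i) (v j) = 0) ∧
      (∀ i, μ i ≠ 0) ∧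
      A = ∑ i, μ i • Matrix.vecMulVec (v i) (u i) :=
  stmt15_general hchar A h
end
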